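/- arXiv:1801.08430 — 3 statements merged into one kernel-verified Lean document; each statement's English description precedes it below -/
import Mathlib

section
/- Every smooth function y(x) whose graph lies on a conic in the plane (i.e. satisfying a·x² + 2b·x·y(x) + y(x)² + 2c·x + 2e·y(x) + f = 0 identically, with the conic nondegenerate in the sense that y''(x) ≠ 0) satisfies the fifth-order ODE y⁽⁵⁾ = -(40/9)·(y''')³/(y'')² + 5·(y'''·y'''')/y''. -/
/-- Every smooth function whose graph lies on a nondegenerate conic
`a·x² + 2b·x·y + y² + 2c·x + 2e·y + f = 0` satisfies the fifth-order ODE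
`y⁽⁵⁾ = -(40/9)·(y''')³/(y'')² + 5·y'''·y''''/y''`. -/
theorem conic_satisfies_fifth_order_ODE
    (y : ℝ → ℝ) (a b c e f : ℝ)
    (hy : ContDiff ℝ (⊤ : ℕ∞) y)
    (hconic : ∀ x : ℝ, a * x ^ 2 + 2 * b * x * y x + (y x) ^ 2
      + 2 * c * x + 2 * e * y x + f = 0)
    (hq : ∀ x : ℝ, iteratedDeriv 2 y x ≠ 0) :
    ∀ x : ℝ, iteratedDeriv 5 y x
      = -(40 / 9) * (iteratedDeriv 3 y x) ^ 3 / (iteratedDeriv 2 y x) ^ 2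
        + 5 * (iteratedDeriv 3 y x * iteratedDeriv 4 y x) / iteratedDeriv 2 y x := by
  have hd : ∀ (n : ℕ) (x : ℝ),
      HasDerivAt (iteratedDeriv n y) (iteratedDeriv (n + 1) y x) x := by
    intro n x
    have h1 : Differentiable ℝ (iteratedDeriv n y) :=
      hy.differentiable_iteratedDeriv n (by exact_mod_cast ENat.coe_lt_top n)
    rw [iteratedDeriv_succ]
    exact (h1 x).hasDerivAt
  have hd0 : ∀ x : ℝ, HasDerivAt y (iteratedDeriv 1 y x) x := by
    intro x
    rw [iteratedDeriv_one]
    exact ((hy.differentiable (by simp)) x).hasDerivAt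
  -- if F = 0 everywhere and F has derivative G at every point, then G = 0
  have step : ∀ (F G : ℝ → ℝ), (∀ x, F x = 0) → (∀ x, HasDerivAt F (G x) x) →
      ∀ x, G x = 0 := by
    intro F G hF hFG x
    have hF0 : F = fun _ => (0 : ℝ) := funext hF
    have h0 : HasDerivAt F 0 x := by rw [hF0]; exact hasDerivAt_const x 0
    exact (hFG x).unique h0
  -- first derivative of the conic relation
  have h1 : ∀ x : ℝ, 2*a*x + 2*b*(y x) + 2*b*x*(iteratedDeriv 1 y x)
      + 2*(y x)*(iteratedDeriv 1 y x) + 2*c + 2*e*(iteratedDeriv 1 y x) = 0 := by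
    apply step _ _ hconic
    intro x
    have H := ((((((hasDerivAt_pow 2 x).const_mul a).add
      (((hasDerivAt_id x).const_mul (2*b)).mul (hd0 x))).add
      ((hd0 x).pow 2)).add
      ((hasDerivAt_id x).const_mul (2*c))).add
      ((hd0 x).const_mul (2*e))).add_const f
    convert H using 1 <;>
      first
        | (funext t; simp only [id_eq, Pi.add_apply, Pi.mul_apply, Pi.pow_apply])
        | (funext t; simp only [id_eq, Pi.add_apply, Pi.mul_apply, Pi.pow_apply]; push_cast; ring)
        | (simp only [id_eq]; push_cast; ring)
        | (push_cast; ring)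
        | rfl
  -- second derivative
  have h2 : ∀ x : ℝ, 2*a + 4*b*(iteratedDeriv 1 y x) + 2*b*x*(iteratedDeriv 2 y x)
      + 2*(iteratedDeriv 1 y x)^2 + 2*(y x)*(iteratedDeriv 2 y x)
      + 2*e*(iteratedDeriv 2 y x) = 0 := by
    apply step _ _ h1
    intro x
    have H := ((((((hasDerivAt_id x).const_mul (2*a)).add
      ((hd0 x).const_mul (2*b))).add
      ((((hasDerivAt_id x).const_mul (2*b)).mul (hd 1 x)))).add
      ((hd0 x).mul ((hd 1 x).const_mul 2))).add
      ((hd 1 x).const_mul (2*e))).add_const (2*c)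
    convert H using 1 <;>
      first
        | (funext t; simp only [id_eq, Pi.add_apply, Pi.mul_apply, Pi.pow_apply]; push_cast; ring)
        | (simp only [id_eq]; push_cast; ring)
        | (push_cast; ring)
        | rfl
  -- third derivative
  have h3 : ∀ x : ℝ, 6*b*(iteratedDeriv 2 y x) + 2*b*x*(iteratedDeriv 3 y x)
      + 6*(iteratedDeriv 1 y x)*(iteratedDeriv 2 y x) + 2*(y x)*(iteratedDeriv 3 y x)
      + 2*e*(iteratedDeriv 3 y x) = 0 := by
    apply step _ _ h2
    intro x
    have H := (((((hd 1 x).const_mul (4*b)).add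
      ((((hasDerivAt_id x).const_mul (2*b)).mul (hd 2 x)))).add
      (((hd 1 x).pow 2).const_mul 2)).add
      ((hd0 x).mul ((hd 2 x).const_mul 2))).add
      ((hd 2 x).const_mul (2*e))
    have H2 := H.add_const (2*a)
    convert H2 using 1 <;>
      first
        | (funext t; simp only [id_eq, Pi.add_apply, Pi.mul_apply, Pi.pow_apply]; push_cast; ring)
        | (simp only [id_eq]; push_cast; ring)
        | (push_cast; ring)
        | rfl
  -- fourth derivative
  have h4 : ∀ x : ℝ, 8*b*(iteratedDeriv 3 y x) + 2*b*x*(iteratedDeriv 4 y x)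
      + 6*(iteratedDeriv 2 y x)^2 + 8*(iteratedDeriv 1 y x)*(iteratedDeriv 3 y x)
      + 2*(y x)*(iteratedDeriv 4 y x) + 2*e*(iteratedDeriv 4 y x) = 0 := by
    apply step _ _ h3
    intro x
    have H := (((((hd 2 x).const_mul (6*b)).add
      ((((hasDerivAt_id x).const_mul (2*b)).mul (hd 3 x)))).add
      ((((hd 1 x).const_mul 6).mul (hd 2 x)))).add
      ((hd0 x).mul ((hd 3 x).const_mul 2))).add
      ((hd 3 x).const_mul (2*e))
    convert H using 1 <;>
      first
        | (funext t; simp only [id_eq, Pi.add_apply, Pi.mul_apply, Pi.pow_apply]; push_cast; ring)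
        | (simp only [id_eq]; push_cast; ring)
        | (push_cast; ring)
        | rfl
  -- fifth derivative
  have h5 : ∀ x : ℝ, 10*b*(iteratedDeriv 4 y x) + 2*b*x*(iteratedDeriv 5 y x)
      + 20*(iteratedDeriv 2 y x)*(iteratedDeriv 3 y x)
      + 10*(iteratedDeriv 1 y x)*(iteratedDeriv 4 y x)
      + 2*(y x)*(iteratedDeriv 5 y x) + 2*e*(iteratedDeriv 5 y x) = 0 := by
    apply step _ _ h4
    intro x
    have H := ((((((hd 3 x).const_mul (8*b)).add
      ((((hasDerivAt_id x).const_mul (2*b)).mul (hd 4 x)))).add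
      (((hd 2 x).pow 2).const_mul 6)).add
      ((((hd 1 x).const_mul 8).mul (hd 3 x)))).add
      ((hd0 x).mul ((hd 4 x).const_mul 2))).add
      ((hd 4 x).const_mul (2*e))
    convert H using 1 <;>
      first
        | (funext t; simp only [id_eq, Pi.add_apply, Pi.mul_apply, Pi.pow_apply]; push_cast; ring)
        | (simp only [id_eq]; push_cast; ring)
        | (push_cast; ring)
        | rfl
  -- the algebra
  intro x
  set q := iteratedDeriv 2 y x with hqdef
  set r := iteratedDeriv 3 y x with hrdef
  set s := iteratedDeriv 4 y x with hsdef
  set t := iteratedDeriv 5 y x with htdef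
  have hq0 : q ≠ 0 := hq x
  have e3 := h3 x
  have e4 := h4 x
  have e5 := h5 x
  have main : 3*q^2*(9*q^2*t - 45*q*r*s + 40*r^3) = 0 := by
    linear_combination ((-(4*r)*(3*q*t-5*r*s) + 5*s*(3*q*s-4*r^2))/2) * e3
      + ((3*q*(3*q*t-5*r*s))/2) * e4 + ((-(3*q)*(3*q*s-4*r^2))/2) * e5
  have key : 9*q^2*t - 45*q*r*s + 40*r^3 = 0 := by
    rcases mul_eq_zero.mp main with h | h
    · exact absurd h (by positivity)
    · exact h
  field_simp
  linear_combination key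
end

section
/- If y : ℝ → ℝ satisfies the ODE y⁽⁵⁾ = -(40/9)·(y''')³/(y'')² + 5·(y'''·y'''')/y'' on an interval where y'' ≠ 0, then the quantity I(x) = (y'''(x))²·y''''(x)/(24·(y''(x))⁵) - 5·(y'''(x))⁴/(162·(y''(x))⁶) - (y''''(x))²/(72·(y''(x))⁴) is constant on that interval. -/
theorem hasDerivAt_iteratedDeriv_of_contDiffOn
    (y : ℝ → ℝ) (a b : ℝ) (hy : ContDiffOn ℝ (⊤ : ℕ∞) y (Set.Ioo a b))
    (n : ℕ) (x : ℝ) (hx : x ∈ Set.Ioo a b) :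
    HasDerivAt (iteratedDeriv n y) (iteratedDeriv (n+1) y x) x := by
  have heq : Set.EqOn (iteratedDerivWithin n y (Set.Ioo a b)) (iteratedDeriv n y) (Set.Ioo a b) :=
    fun z hz => by
      simp [iteratedDerivWithin, iteratedDeriv, iteratedFDerivWithin_of_isOpen n isOpen_Ioo hz]
  have hnb : Set.Ioo a b ∈ nhds x := isOpen_Ioo.mem_nhds hx
  have hmn : (n : WithTop ℕ∞) < ((⊤ : ℕ∞) : WithTop ℕ∞) := by exact_mod_cast ENat.coe_lt_top n
  have hdiff : DifferentiableOn ℝ (iteratedDerivWithin n y (Set.Ioo a b)) (Set.Ioo a b) :=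
    hy.differentiableOn_iteratedDerivWithin hmn isOpen_Ioo.uniqueDiffOn
  have h1 : DifferentiableAt ℝ (iteratedDeriv n y) x := by
    have := (hdiff x hx).differentiableAt hnb
    exact this.congr_of_eventuallyEq (Filter.eventuallyEq_of_mem hnb fun z hz => (heq hz).symm)
  have := h1.hasDerivAt
  rwa [← iteratedDeriv_succ] at this

/-- Along solutions of `y⁽⁵⁾ = -(40/9)·r³/q² + 5·r·s/q` (with `q = y'' ≠ 0` on an
interval), the quantity `I = r²s/(24q⁵) - 5r⁴/(162q⁶) - s²/(72q⁴)` is a first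
integral: it is constant on the interval. -/
theorem first_integral_of_conic_ODE
    (y : ℝ → ℝ) (a b : ℝ)
    (hy : ContDiffOn ℝ (⊤ : ℕ∞) y (Set.Ioo a b))
    (hq : ∀ x ∈ Set.Ioo a b, iteratedDeriv 2 y x ≠ 0)
    (hode : ∀ x ∈ Set.Ioo a b, iteratedDeriv 5 y x
      = -(40 / 9) * (iteratedDeriv 3 y x) ^ 3 / (iteratedDeriv 2 y x) ^ 2
        + 5 * (iteratedDeriv 3 y x * iteratedDeriv 4 y x) / iteratedDeriv 2 y x) :
    ∃ k : ℝ, ∀ x ∈ Set.Ioo a b,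
      (iteratedDeriv 3 y x) ^ 2 * iteratedDeriv 4 y x / (24 * (iteratedDeriv 2 y x) ^ 5)
        - 5 * (iteratedDeriv 3 y x) ^ 4 / (162 * (iteratedDeriv 2 y x) ^ 6)
        - (iteratedDeriv 4 y x) ^ 2 / (72 * (iteratedDeriv 2 y x) ^ 4) = k := by
  set Q := iteratedDeriv 2 y with hQdef
  set R := iteratedDeriv 3 y with hRdef
  set S := iteratedDeriv 4 y with hSdef
  set T := iteratedDeriv 5 y with hTdef
  set F : ℝ → ℝ := fun x =>
    R x ^ 2 * S x / (24 * Q x ^ 5) - 5 * R x ^ 4 / (162 * Q x ^ 6)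
      - S x ^ 2 / (72 * Q x ^ 4) with hFdef
  have hFderiv : ∀ x ∈ Set.Ioo a b, HasDerivAt F 0 x := by
    intro x hx
    have hQ : HasDerivAt Q (R x) x := hasDerivAt_iteratedDeriv_of_contDiffOn y a b hy 2 x hx
    have hR : HasDerivAt R (S x) x := hasDerivAt_iteratedDeriv_of_contDiffOn y a b hy 3 x hx
    have hS : HasDerivAt S (T x) x := hasDerivAt_iteratedDeriv_of_contDiffOn y a b hy 4 x hx
    have hq0 : Q x ≠ 0 := hq x hx
    have hd1 : (24 : ℝ) * Q x ^ 5 ≠ 0 := by positivity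
    have hd2 : (162 : ℝ) * Q x ^ 6 ≠ 0 := by positivity
    have hd3 : (72 : ℝ) * Q x ^ 4 ≠ 0 := by positivity
    have H :=
      ((((hR.pow 2).mul hS).div ((hasDerivAt_const x (24:ℝ)).mul (hQ.pow 5)) hd1).sub
        (((hasDerivAt_const x (5:ℝ)).mul (hR.pow 4)).div
          ((hasDerivAt_const x (162:ℝ)).mul (hQ.pow 6)) hd2)).sub
        ((hS.pow 2).div ((hasDerivAt_const x (72:ℝ)).mul (hQ.pow 4)) hd3)
    convert H using 1
    case e'_4 => rfl
    case e'_5 => rfl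
    case e'_8 => rfl
    rw [hode x hx]
    simp only [Pi.mul_apply, Pi.pow_apply]
    field_simp
    ring
  -- F is constant on the open interval
  rcases Set.eq_empty_or_nonempty (Set.Ioo a b) with he | ⟨x₀, hx₀⟩
  · exact ⟨0, fun x hx => absurd hx (by simp [he])⟩
  · refine ⟨F x₀, fun x hx => ?_⟩
    have hconst : ∀ z ∈ Set.Ioo a b, F z = F x₀ := by
      intro z hz
      apply (convex_Ioo a b).is_const_of_fderivWithin_eq_zero
        (fun w hw => ((hFderiv w hw).differentiableAt).differentiableWithinAt)
        (fun w hw => ?_) hz hx₀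
      rw [fderivWithin_of_isOpen isOpen_Ioo hw]
      have := (hFderiv w hw).hasFDerivAt.fderiv
      simp only [this]
      ext
      simp
    exact hconst x hx
end

section
/- With A, B, C, E, F, G as in the conic-ODE construction and Λ₂ = (80/9)r³/q³ - 5rs/q², Λ₃ = 5s/q - (40/3)r²/q², Λ₄ = 5r/q, the following three identities hold along solutions of the ODE: E' + FQ = Λ₂·4PQ + Λ₃·A + Λ₄·E; F' + 4PE + 2QG = Λ₂·4P' + Λ₃·B + Λ₄·F; G' + 3PF + 3QH = Λ₂·12P² + Λ₃·C + Λ₄·G. -/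
noncomputable section

def qf (y : ℝ → ℝ) : ℝ → ℝ := iteratedDeriv 2 y
def rf (y : ℝ → ℝ) : ℝ → ℝ := iteratedDeriv 3 y
def sf (y : ℝ → ℝ) : ℝ → ℝ := iteratedDeriv 4 y
def Pf (y : ℝ → ℝ) : ℝ → ℝ := fun t => qf y t ^ ((1 : ℝ) / 2)
def Qf (y : ℝ → ℝ) : ℝ → ℝ := fun t => (rf y t) ^ 2 / (48 * qf y t ^ ((5 : ℝ) / 2))
def Af (y : ℝ → ℝ) : ℝ → ℝ := fun t =>
  -(rf y t) ^ 3 / (8 * (qf y t) ^ 3) + rf y t * sf y t / (6 * (qf y t) ^ 2)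
def Bf (y : ℝ → ℝ) : ℝ → ℝ := fun t =>
  2 * sf y t / qf y t ^ ((1 : ℝ) / 2) - (rf y t) ^ 2 / (6 * qf y t ^ ((3 : ℝ) / 2))
def Cf (y : ℝ → ℝ) : ℝ → ℝ := fun t => 18 * rf y t
def Ef (y : ℝ → ℝ) : ℝ → ℝ := fun t =>
  (sf y t) ^ 2 / (6 * (qf y t) ^ 2) + (rf y t) ^ 2 * sf y t / (6 * (qf y t) ^ 3)
    - (319 / 864) * (rf y t) ^ 4 / (qf y t) ^ 4
def Ff (y : ℝ → ℝ) : ℝ → ℝ := fun t =>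
  (28 / 3) * rf y t * sf y t / qf y t ^ ((3 : ℝ) / 2)
    - (151 / 18) * (rf y t) ^ 3 / qf y t ^ ((5 : ℝ) / 2)
def Gf (y : ℝ → ℝ) : ℝ → ℝ := fun t => 24 * sf y t + (rf y t) ^ 2 / qf y t
def Hf (y : ℝ → ℝ) : ℝ → ℝ := fun t => 72 * qf y t ^ ((1 : ℝ) / 2) * rf y t
/-- `Λ₂ = (80/9)r³/q³ - 5rs/q²`. -/
def L2f (y : ℝ → ℝ) : ℝ → ℝ := fun t =>
  (80 / 9) * (rf y t) ^ 3 / (qf y t) ^ 3 - 5 * rf y t * sf y t / (qf y t) ^ 2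
/-- `Λ₃ = 5s/q - (40/3)r²/q²`. -/
def L3f (y : ℝ → ℝ) : ℝ → ℝ := fun t =>
  5 * sf y t / qf y t - (40 / 3) * (rf y t) ^ 2 / (qf y t) ^ 2
/-- `Λ₄ = 5r/q`. -/
def L4f (y : ℝ → ℝ) : ℝ → ℝ := fun t => 5 * rf y t / qf y t

set_option maxHeartbeats 4000000 in
/-- The three remaining consistency identities from
`(ds)' = Λ₂ dq + Λ₃ dr + Λ₄ ds` hold along solutions of the conic ODE. -/
theorem three_identities
    (y : ℝ → ℝ) (hy : ContDiff ℝ (⊤ : ℕ∞) y)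
    (hq : ∀ x : ℝ, 0 < qf y x)
    (hode : ∀ x : ℝ, iteratedDeriv 5 y x
      = -(40 / 9) * (rf y x) ^ 3 / (qf y x) ^ 2 + 5 * rf y x * sf y x / qf y x) :
    ∀ x : ℝ,
      (deriv (Ef y) x + Ff y x * Qf y x
        = L2f y x * (4 * Pf y x * Qf y x) + L3f y x * Af y x + L4f y x * Ef y x) ∧
      (deriv (Ff y) x + 4 * Pf y x * Ef y x + 2 * Qf y x * Gf y x
        = L2f y x * (4 * deriv (Pf y) x) + L3f y x * Bf y x + L4f y x * Ff y x) ∧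
      (deriv (Gf y) x + 3 * Pf y x * Ff y x + 3 * Qf y x * Hf y x
        = L2f y x * (12 * (Pf y x) ^ 2) + L3f y x * Cf y x + L4f y x * Gf y x) := by
  intro x
  have hdiff : ∀ n : ℕ, Differentiable ℝ (iteratedDeriv n y) := fun n =>
    hy.differentiable_iteratedDeriv n (by exact_mod_cast lt_top_iff_ne_top.2 (by simp))
  have hdn : ∀ n : ℕ, HasDerivAt (iteratedDeriv n y) (iteratedDeriv (n + 1) y x) x := by
    intro n
    rw [iteratedDeriv_succ]
    exact (hdiff n x).hasDerivAt
  have hq' : HasDerivAt (qf y) (rf y x) x := hdn 2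
  have hr' : HasDerivAt (rf y) (sf y x) x := hdn 3
  have hs' : HasDerivAt (sf y) (iteratedDeriv 5 y x) x := hdn 4
  have hq0 : qf y x ≠ 0 := (hq x).ne'
  have hupos : (0 : ℝ) < qf y x ^ ((1 : ℝ) / 2) := Real.rpow_pos_of_pos (hq x) _
  have h32ne : qf y x ^ ((3 : ℝ) / 2) ≠ 0 := (Real.rpow_pos_of_pos (hq x) _).ne'
  have h52ne : qf y x ^ ((5 : ℝ) / 2) ≠ 0 := (Real.rpow_pos_of_pos (hq x) _).ne'
  have hP : HasDerivAt (Pf y)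
      (rf y x * ((1 : ℝ) / 2) * qf y x ^ ((1 : ℝ) / 2 - 1)) x :=
    hq'.rpow_const (Or.inl hq0)
  have h32' : HasDerivAt (fun t => qf y t ^ ((3 : ℝ) / 2))
      (rf y x * ((3 : ℝ) / 2) * qf y x ^ ((3 : ℝ) / 2 - 1)) x :=
    hq'.rpow_const (Or.inl hq0)
  have h52' : HasDerivAt (fun t => qf y t ^ ((5 : ℝ) / 2))
      (rf y x * ((5 : ℝ) / 2) * qf y x ^ ((5 : ℝ) / 2 - 1)) x :=
    hq'.rpow_const (Or.inl hq0)
  -- exponent simplifications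
  have e1 : qf y x ^ ((1 : ℝ) / 2 - 1) = qf y x ^ ((1 : ℝ) / 2) / qf y x := by
    rw [Real.rpow_sub (hq x), Real.rpow_one]
  have e2 : qf y x ^ ((3 : ℝ) / 2 - 1) = qf y x ^ ((1 : ℝ) / 2) := by norm_num
  have e3 : qf y x ^ ((5 : ℝ) / 2 - 1) = qf y x ^ ((3 : ℝ) / 2) := by norm_num
  have e4 : qf y x ^ ((3 : ℝ) / 2) = qf y x * qf y x ^ ((1 : ℝ) / 2) := by
    rw [show (3 : ℝ) / 2 = 1 + 1 / 2 by norm_num, Real.rpow_add (hq x), Real.rpow_one]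
  have e5 : qf y x ^ ((5 : ℝ) / 2) = qf y x * (qf y x * qf y x ^ ((1 : ℝ) / 2)) := by
    rw [show (5 : ℝ) / 2 = 1 + 3 / 2 by norm_num, Real.rpow_add (hq x), Real.rpow_one, e4]
  set u := qf y x ^ ((1 : ℝ) / 2) with hudef
  have hu0 : u ≠ 0 := hupos.ne'
  have hu2 : u ^ 2 = qf y x := by
    rw [hudef, ← Real.rpow_natCast (qf y x ^ ((1 : ℝ) / 2)) 2, ← Real.rpow_mul (hq x).le]
    norm_num
  have hE : HasDerivAt (Ef y)
      ((2 * sf y x ^ 1 * iteratedDeriv 5 y x * (6 * qf y x ^ 2)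
          - sf y x ^ 2 * (6 * (2 * qf y x ^ 1 * rf y x))) / (6 * qf y x ^ 2) ^ 2
        + ((2 * rf y x ^ 1 * sf y x * sf y x + rf y x ^ 2 * iteratedDeriv 5 y x)
              * (6 * qf y x ^ 3)
            - rf y x ^ 2 * sf y x * (6 * (3 * qf y x ^ 2 * rf y x))) / (6 * qf y x ^ 3) ^ 2
        - ((319 / 864 * (4 * rf y x ^ 3 * sf y x)) * qf y x ^ 4
            - 319 / 864 * rf y x ^ 4 * (4 * qf y x ^ 3 * rf y x)) / (qf y x ^ 4) ^ 2) x := by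
    exact (((hs'.pow 2).div ((hq'.pow 2).const_mul 6)
        (mul_ne_zero (by norm_num) (pow_ne_zero _ hq0))).add
      ((((hr'.pow 2).mul hs').div ((hq'.pow 3).const_mul 6)
        (mul_ne_zero (by norm_num) (pow_ne_zero _ hq0))))).sub
      (((hr'.pow 4).const_mul (319 / 864)).div (hq'.pow 4) (pow_ne_zero _ hq0))
  have hF : HasDerivAt (Ff y)
      (((28 / 3 * sf y x * sf y x + 28 / 3 * rf y x * iteratedDeriv 5 y x)
            * qf y x ^ ((3 : ℝ) / 2)
          - 28 / 3 * rf y x * sf y x * (rf y x * ((3 : ℝ) / 2) * qf y x ^ ((3 : ℝ) / 2 - 1)))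
          / (qf y x ^ ((3 : ℝ) / 2)) ^ 2
        - ((151 / 18 * (3 * rf y x ^ 2 * sf y x)) * qf y x ^ ((5 : ℝ) / 2)
            - 151 / 18 * rf y x ^ 3 * (rf y x * ((5 : ℝ) / 2) * qf y x ^ ((5 : ℝ) / 2 - 1)))
          / (qf y x ^ ((5 : ℝ) / 2)) ^ 2) x := by
    have := ((((hr'.const_mul (28 / 3 : ℝ)).mul hs').div h32' h32ne).sub
      (((hr'.pow 3).const_mul (151 / 18 : ℝ)).div h52' h52ne))
    convert this using 2
    · rfl
    · rfl
    · rfl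
    · simp only [Pi.mul_apply]
    · simp only [Pi.pow_apply]; ring
  have hG : HasDerivAt (Gf y)
      (24 * iteratedDeriv 5 y x
        + (2 * rf y x ^ 1 * sf y x * qf y x - rf y x ^ 2 * rf y x) / qf y x ^ 2) x :=
    (hs'.const_mul 24).add ((hr'.pow 2).div hq' hq0)
  have hEd : deriv (Ef y) x = _ := hE.deriv
  have hFd : deriv (Ff y) x = _ := hF.deriv
  have hGd : deriv (Gf y) x = _ := hG.deriv
  have hPd : deriv (Pf y) x = _ := hP.deriv
  refine ⟨?_, ?_, ?_⟩
  · rw [hEd, hode x]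
    simp only [Qf, Af, Ef, Ff, L2f, L3f, L4f, Pf]
    rw [e4, e5, ← hudef, ← hu2]
    field_simp
    ring
  · rw [hFd, hPd, hode x]
    simp only [Qf, Bf, Ef, Ff, Gf, L2f, L3f, L4f, Pf]
    rw [e1, e2, e3, e4, e5, ← hudef, ← hu2]
    field_simp
    ring
  · rw [hGd, hode x]
    simp only [Qf, Cf, Ff, Gf, Hf, L2f, L3f, L4f, Pf]
    rw [e4, e5, ← hudef, ← hu2]
    field_simp
    ring
end
end
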